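/- Let G be a simple graph, S ⊆ V a set of vertices that are pairwise closed twins, and A a vertex with N(A) = S. If θ is a second-order stationary point of the Kuramoto energy on G, then all vertices in S ∪ {A} have the same phasor: v_i = v_j for all i, j ∈ S ∪ {A}. -/

import Mathlib

open Real Classical

noncomputable section

/-- Real-valued adjacency indicator of a simple graph. -/
def adjW {V : Type*} (G : SimpleGraph V) (i j : V) : ℝ := if G.Adj i j then 1 else 0

/-- The phasor (unit vector in the plane) associated with an angle. -/
def phasor (t : ℝ) : ℝ × ℝ := (Real.cos t, Real.sin t)

/-- The Kuramoto energy. -/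
def kEnergy {V : Type*} [Fintype V] (G : SimpleGraph V) (θ : V → ℝ) : ℝ :=
  (1 / 2) * ∑ i, ∑ j, adjW G i j * (1 - Real.cos (θ i - θ j))

/-- The Hessian of the Kuramoto energy. -/
def kHess {V : Type*} [Fintype V] (G : SimpleGraph V) (θ : V → ℝ) : Matrix V V ℝ :=
  fun i j =>
    if i = j then ∑ k, adjW G i k * Real.cos (θ i - θ k)
    else -(adjW G i j * Real.cos (θ i - θ j))

/-- First-order (equilibrium) condition of the homogeneous Kuramoto model. -/
def IsEquilibrium {V : Type*} [Fintype V] (G : SimpleGraph V) (θ : V → ℝ) : Prop :=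
  ∀ i, ∑ j, adjW G i j * Real.sin (θ j - θ i) = 0

/-- Second-order stationary point of the Kuramoto energy. -/
def IsSOSP {V : Type*} [Fintype V] (G : SimpleGraph V) (θ : V → ℝ) : Prop :=
  IsEquilibrium G θ ∧ (kHess G θ).PosSemidef


/-! At an equilibrium the local field `∑ₖ A_ik v_k` of every vertex is parallel to its own phasor,
with coefficient the diagonal Hessian entry `H_ii`. For distinct closed twins `i, j` the two local
fields differ only through the edge `ij`, which gives `(1 + H_ii) v_i = (1 + H_jj) v_j`; taking
scalar products with `v_i` and `v_j` and using positivity of the Hessian along `e_i - e_j` forces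
`cos (θ_i - θ_j) = 1`. Once `S` is synchronized, the local field of `A` is a positive multiple of
the common phasor, and `H_AA ≥ 0` aligns `v_A` with it. -/

lemma Matrix.PosSemidef.apply_sub_apply_sub_apply_add_apply_nonneg {V : Type*} [Fintype V]
    [DecidableEq V] {M : Matrix V V ℝ} (hM : M.PosSemidef) (i j : V) :
    0 ≤ M i i - M i j - M j i + M j j := by
  have h := hM.dotProduct_mulVec_nonneg (Pi.single i 1 - Pi.single j 1)
  simp only [star_trivial, Matrix.mulVec_sub, Matrix.mulVec_single_one, sub_dotProduct,
    dotProduct_sub, single_dotProduct, one_mul, Matrix.col_apply] at h ⊢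
  linarith

lemma phasor_eq_of_cos_sub_eq_one {x y : ℝ} (h : cos (x - y) = 1) : phasor x = phasor y := by
  obtain ⟨m, hm⟩ := (cos_eq_one_iff _).1 h
  rw [show x = y + m * (2 * π) by linarith, phasor, cos_add_int_mul_two_pi,
    sin_add_int_mul_two_pi, phasor]

lemma eq_mul_cos_sub_of_smul_phasor_eq {a b x y : ℝ} (h : a • phasor x = b • phasor y) :
    a = b * cos (x - y) := by
  simp only [phasor, Prod.smul_mk, smul_eq_mul, Prod.mk.injEq] at h
  calc a = a * cos x * cos x + a * sin x * sin x := by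
          linear_combination -a * sin_sq_add_cos_sq x
    _ = b * cos (x - y) := by rw [h.1, h.2, cos_sub]; ring

lemma adjW_of_adj {V : Type*} {G : SimpleGraph V} {i j : V} (h : G.Adj i j) : adjW G i j = 1 :=
  if_pos h

section Kuramoto

variable {V : Type*} [Fintype V] {G : SimpleGraph V} {θ : V → ℝ}

def localField (G : SimpleGraph V) (θ : V → ℝ) (i : V) : ℝ × ℝ :=
  ∑ k, adjW G i k • phasor (θ k)

lemma kHess_apply_self (i : V) : kHess G θ i i = ∑ k, adjW G i k * cos (θ i - θ k) :=
  if_pos rfl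

lemma kHess_apply_of_adj {i j : V} (h : G.Adj i j) : kHess G θ i j = -cos (θ i - θ j) := by
  rw [kHess, if_neg h.ne, adjW_of_adj h, one_mul]

lemma IsEquilibrium.localField_eq (hθ : IsEquilibrium G θ) (i : V) :
    localField G θ i = kHess G θ i i • phasor (θ i) := by
  set X := ∑ k, adjW G i k * cos (θ k)
  set Y := ∑ k, adjW G i k * sin (θ k)
  have hH : kHess G θ i i = cos (θ i) * X + sin (θ i) * Y := by
    rw [kHess_apply_self, Finset.mul_sum, Finset.mul_sum, ← Finset.sum_add_distrib]
    exact Finset.sum_congr rfl fun k _ => by rw [cos_sub]; ring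
  have hE : cos (θ i) * Y - sin (θ i) * X = 0 := by
    rw [← hθ i, Finset.mul_sum, Finset.mul_sum, ← Finset.sum_sub_distrib]
    exact Finset.sum_congr rfl fun k _ => by rw [sin_sub]; ring
  ext
  · simp only [localField, Prod.fst_sum, phasor, Prod.smul_mk, smul_eq_mul, hH]
    change X = _
    linear_combination (-X) * sin_sq_add_cos_sq (θ i) - sin (θ i) * hE
  · simp only [localField, Prod.snd_sum, phasor, Prod.smul_mk, smul_eq_mul, hH]
    change Y = _
    linear_combination (-Y) * sin_sq_add_cos_sq (θ i) + cos (θ i) * hE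

lemma localField_add_phasor_eq_of_closed_twins {i j : V}
    (h : insert i (G.neighborSet i) = insert j (G.neighborSet j)) :
    localField G θ i + phasor (θ i) = localField G θ j + phasor (θ j) := by
  have hclosed : ∀ l, localField G θ l + phasor (θ l) =
      ∑ k, (insert l (G.neighborSet l)).indicator (1 : V → ℝ) k • phasor (θ k) := fun l => by
    have hind : ∀ k, (insert l (G.neighborSet l)).indicator (1 : V → ℝ) k =
        adjW G l k + if k = l then 1 else 0 := fun k => by
      rcases eq_or_ne k l with rfl | hk
      · simp [adjW]
      · simp [Set.indicator, adjW, hk]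
    simp only [hind, add_smul, Finset.sum_add_distrib, ite_smul, one_smul, zero_smul,
      Finset.sum_ite_eq', Finset.mem_univ, if_true, localField]
  rw [hclosed, hclosed, h]

theorem cos_sub_eq_one_of_closed_twins (hθ : IsSOSP G θ) {i j : V} (hij : i ≠ j)
    (h : insert i (G.neighborSet i) = insert j (G.neighborSet j)) :
    cos (θ i - θ j) = 1 := by
  have hadj : G.Adj i j := by
    have : j ∈ insert i (G.neighborSet i) := h ▸ Set.mem_insert j _
    exact this.resolve_left hij.symm
  have hvec : (1 + kHess G θ i i) • phasor (θ i) = (1 + kHess G θ j j) • phasor (θ j) := by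
    simpa only [add_smul, one_smul, add_comm, ← hθ.1.localField_eq]
      using localField_add_phasor_eq_of_closed_twins (θ := θ) h
  set c := cos (θ i - θ j)
  have hi : 1 + kHess G θ i i = (1 + kHess G θ j j) * c := eq_mul_cos_sub_of_smul_phasor_eq hvec
  have hj : 1 + kHess G θ j j = (1 + kHess G θ i i) * c := by
    rw [eq_mul_cos_sub_of_smul_phasor_eq hvec.symm, ← neg_sub, cos_neg]
  have hpsd : 2 * (1 - c) ≤ (1 + kHess G θ i i) + (1 + kHess G θ j j) := by
    have := hθ.2.apply_sub_apply_sub_apply_add_apply_nonneg i j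
    rw [kHess_apply_of_adj hadj, kHess_apply_of_adj hadj.symm, ← neg_sub (θ i), cos_neg] at this
    linarith
  have hprod : ((1 + kHess G θ i i) + (1 + kHess G θ j j)) * (1 - c) = 0 := by
    linear_combination hi + hj
  by_contra hc
  have hc' : 0 < 1 - c := sub_pos.2 (lt_of_le_of_ne (cos_le_one _) hc)
  have := (mul_eq_zero.1 hprod).resolve_right hc'.ne'
  linarith

theorem cos_sub_eq_one_of_neighbors_sync (hθ : IsSOSP G θ) {a j : V} (hj : G.Adj a j)
    (hsync : ∀ k, G.Adj a k → phasor (θ k) = phasor (θ j)) :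
    cos (θ a - θ j) = 1 := by
  set m := ∑ k, adjW G a k
  have hm : 0 < m := Finset.sum_pos' (fun k _ => by unfold adjW; positivity)
    ⟨j, Finset.mem_univ _, by rw [adjW_of_adj hj]; exact one_pos⟩
  have hvec : kHess G θ a a • phasor (θ a) = m • phasor (θ j) := by
    rw [← hθ.1.localField_eq, localField, Finset.sum_smul]
    refine Finset.sum_congr rfl fun k _ => ?_
    by_cases hk : G.Adj a k
    · rw [hsync k hk]
    · simp [adjW, hk]
  set c := cos (θ a - θ j)
  have ha : kHess G θ a a = m * c := eq_mul_cos_sub_of_smul_phasor_eq hvec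
  have hm_eq : m = kHess G θ a a * c := by
    rw [eq_mul_cos_sub_of_smul_phasor_eq hvec.symm, ← neg_sub, cos_neg]
  have hc_nonneg : 0 ≤ c := nonneg_of_mul_nonneg_right (ha ▸ hθ.2.diag_nonneg) hm
  have hc_sq : c ^ 2 = 1 := by
    refine mul_left_cancel₀ hm.ne' ?_
    linear_combination -hm_eq - c * ha
  exact (pow_eq_one_iff_of_nonneg hc_nonneg two_ne_zero).1 hc_sq

end Kuramoto

theorem twin_attachment_sync
    {n : ℕ} (G : SimpleGraph (Fin n)) (θ : Fin n → ℝ)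
    (S : Set (Fin n)) (A : Fin n)
    (htwin : ∀ i ∈ S, ∀ j ∈ S,
      insert i (G.neighborSet i) = insert j (G.neighborSet j))
    (hA : G.neighborSet A = S)
    (hsosp : IsSOSP G θ) :
    ∀ i ∈ insert A S, ∀ j ∈ insert A S, phasor (θ i) = phasor (θ j) := by
  have hS : ∀ i ∈ S, ∀ j ∈ S, phasor (θ i) = phasor (θ j) := by
    intro i hi j hj
    rcases eq_or_ne i j with rfl | hij
    · rfl
    exact phasor_eq_of_cos_sub_eq_one
      (cos_sub_eq_one_of_closed_twins hsosp hij (htwin i hi j hj))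
  have hAdj : ∀ k, G.Adj A k ↔ k ∈ S := fun k => by rw [← hA, SimpleGraph.mem_neighborSet]
  have hAS : ∀ j ∈ S, phasor (θ A) = phasor (θ j) := fun j hj =>
    phasor_eq_of_cos_sub_eq_one (cos_sub_eq_one_of_neighbors_sync hsosp ((hAdj j).2 hj)
      fun k hk => hS k ((hAdj k).1 hk) j hj)
  rintro i (rfl | hi) j (rfl | hj)
  · rfl
  · exact hAS j hj
  · exact (hAS i hi).symm
  · exact hS i hi j hj
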